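/- arXiv:0908.1250 — 2 statements merged into one kernel-verified Lean document; each statement's English description precedes it below -/
import Mathlib

section
/- If F: C → D is a monoidal functor and A is an algebra in D, then the comma category F↓A is monoidal, with tensor product (X,x)⊗(Y,y) = (X⊗Y, μ_A ∘ (x⊗y) ∘ F_{X,Y}) and unit (I, ι_A ∘ F_0), and the forgetful functor F↓A → C is monoidal. -/
open CategoryTheory MonoidalCategory Functor.LaxMonoidal Functor.OplaxMonoidal

/-!
The tensor product and unit of `F ↓ A` lie over those of `C`, so one only has to check that
tensor products of morphisms, associators and unitors of `C` are morphisms of `F ↓ A`. For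
tensor products this is naturality of `δ`; for the associators and unitors, the coherence of
`δ` and `η` with those of `D` turns the associativity and unit laws of `A` into exactly the
required identities. The monoidal axioms then hold because the projection to `C` is faithful,
and the projection is strict monoidal.
-/

universe v₁ v₂ u₁ u₂

namespace CategoryTheory.CostructuredArrow

variable {C : Type u₁} {D : Type u₂} [Category.{v₁} C] [Category.{v₂} D]
  [MonoidalCategory C] [MonoidalCategory D] {F : C ⥤ D} [F.OplaxMonoidal] {A : D} [MonObj A]

variable (F) in
def tensorArrow {X Y : C} (x : F.obj X ⟶ A) (y : F.obj Y ⟶ A) : F.obj (X ⊗ Y) ⟶ A :=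
  δ F X Y ≫ (x ⊗ₘ y) ≫ MonObj.mul

variable (F A) in
def unitArrow : F.obj (𝟙_ C) ⟶ A :=
  η F ≫ MonObj.one

lemma map_tensorHom_comp_tensorArrow {X X' Y Y' : C} (f : X ⟶ X') (g : Y ⟶ Y')
    (x : F.obj X' ⟶ A) (y : F.obj Y' ⟶ A) :
    F.map (f ⊗ₘ g) ≫ tensorArrow F x y = tensorArrow F (F.map f ≫ x) (F.map g ≫ y) := by
  rw [tensorArrow, ← δ_natural_assoc, tensorHom_comp_tensorHom_assoc, tensorArrow]

lemma map_associator_hom_comp_tensorArrow {X Y Z : C} (x : F.obj X ⟶ A) (y : F.obj Y ⟶ A)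
    (z : F.obj Z ⟶ A) :
    F.map (α_ X Y Z).hom ≫ tensorArrow F x (tensorArrow F y z) =
      tensorArrow F (tensorArrow F x y) z := by
  calc F.map (α_ X Y Z).hom ≫ tensorArrow F x (tensorArrow F y z)
      = F.map (α_ X Y Z).hom ≫ δ F X (Y ⊗ Z) ≫ F.obj X ◁ δ F Y Z ≫
          (x ⊗ₘ (y ⊗ₘ z)) ≫ A ◁ MonObj.mul ≫ MonObj.mul := by
        simp only [tensorArrow, ← id_tensorHom, tensorHom_comp_tensorHom_assoc,
          Category.id_comp, Category.comp_id]
    _ = δ F (X ⊗ Y) Z ≫ δ F X Y ▷ F.obj Z ≫ ((x ⊗ₘ y) ⊗ₘ z) ≫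
          MonObj.mul ▷ A ≫ MonObj.mul := by
        rw [MonObj.mul_assoc, associator_naturality_assoc,
          Functor.OplaxMonoidal.associativity_assoc]
    _ = tensorArrow F (tensorArrow F x y) z := by
        simp only [tensorArrow, ← tensorHom_id, tensorHom_comp_tensorHom_assoc,
          Category.id_comp, Category.comp_id]

lemma map_leftUnitor_hom_comp {X : C} (x : F.obj X ⟶ A) :
    F.map (λ_ X).hom ≫ x = tensorArrow F (unitArrow F A) x := by
  rw [tensorArrow, unitArrow, MonoidalCategory.tensorHom_def, comp_whiskerRight,
    Category.assoc, Category.assoc, ← whisker_exchange_assoc, MonObj.one_mul,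
    leftUnitor_naturality, left_unitality_hom_assoc]

lemma map_rightUnitor_hom_comp {X : C} (x : F.obj X ⟶ A) :
    F.map (ρ_ X).hom ≫ x = tensorArrow F x (unitArrow F A) := by
  rw [tensorArrow, unitArrow, MonoidalCategory.tensorHom_def', MonoidalCategory.whiskerLeft_comp,
    Category.assoc, Category.assoc, whisker_exchange_assoc, MonObj.mul_one,
    rightUnitor_naturality, right_unitality_hom_assoc]

instance : MonoidalCategoryStruct (CostructuredArrow F A) where
  tensorObj X Y := mk (tensorArrow F X.hom Y.hom)
  tensorUnit := mk (unitArrow F A)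
  tensorHom f g := homMk (f.left ⊗ₘ g.left) <| by
    rw [mk_hom_eq_self, map_tensorHom_comp_tensorArrow, w f, w g]; rfl
  whiskerLeft X _ _ f := homMk (X.left ◁ f.left) <| by
    rw [mk_hom_eq_self, ← id_tensorHom, map_tensorHom_comp_tensorArrow, F.map_id,
      Category.id_comp, w f]; rfl
  whiskerRight f Y := homMk (f.left ▷ Y.left) <| by
    rw [mk_hom_eq_self, ← tensorHom_id, map_tensorHom_comp_tensorArrow, F.map_id,
      Category.id_comp, w f]; rfl
  associator X Y Z := isoMk (α_ X.left Y.left Z.left) (map_associator_hom_comp_tensorArrow _ _ _)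
  leftUnitor X := isoMk (λ_ X.left) (map_leftUnitor_hom_comp X.hom)
  rightUnitor X := isoMk (ρ_ X.left) (map_rightUnitor_hom_comp X.hom)

/- The comparison isomorphisms are identities, but `(proj F A).obj (X ⊗ Y)` and
`X.left ⊗ Y.left` agree only up to unfolding, so `simp` cannot cancel them until `change`
has restated the goal in `C`. -/
variable (F A) in
def projInducingData : Monoidal.InducingFunctorData (proj F A) where
  μIso _ _ := Iso.refl _
  εIso := Iso.refl _
  whiskerLeft_eq _ _ _ _ := ((Category.id_comp _).trans (Category.comp_id _)).symm
  whiskerRight_eq _ _ := ((Category.id_comp _).trans (Category.comp_id _)).symm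
  tensorHom_eq _ _ := ((Category.id_comp _).trans (Category.comp_id _)).symm
  associator_eq X Y Z := by
    change (α_ X.left Y.left Z.left).hom =
      (𝟙 _ ≫ (𝟙 _ ⊗ₘ 𝟙 _)) ≫ (α_ X.left Y.left Z.left).hom ≫ ((𝟙 _ ⊗ₘ 𝟙 _) ≫ 𝟙 _)
    simp
  leftUnitor_eq X := by
    change (λ_ X.left).hom = (𝟙 _ ≫ (𝟙 _ ⊗ₘ 𝟙 _)) ≫ (λ_ X.left).hom
    simp
  rightUnitor_eq X := by
    change (ρ_ X.left).hom = (𝟙 _ ≫ (𝟙 _ ⊗ₘ 𝟙 _)) ≫ (ρ_ X.left).hom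
    simp

instance : MonoidalCategory (CostructuredArrow F A) :=
  Monoidal.induced _ (projInducingData F A)

instance : (proj F A).Monoidal :=
  Monoidal.fromInducedMonoidal _ (projInducingData F A)

end CategoryTheory.CostructuredArrow

/-- If `F : C ⥤ D` is a monoidal functor and `A` is an algebra in `D`, then the
comma category `F ↓ A` (of pairs `(X, x : F(X) ⟶ A)`, implemented as
`CostructuredArrow F A.X`) carries a monoidal structure with tensor product
`(X,x) ⊗ (Y,y) = (X ⊗ Y, μ_A ∘ (x ⊗ y) ∘ F_{X,Y})` — where
`F_{X,Y} : F(X ⊗ Y) ⟶ F(X) ⊗ F(Y)` is the (inverse) monoidal structure `δ` of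
`F` — and unit `(𝟙_ C, ι_A ∘ F₀)`, and such that the forgetful (projection)
functor `F ↓ A ⥤ C` is monoidal. -/
theorem stmt_2 {C D : Type*} [Category C] [Category D]
    [MonoidalCategory C] [MonoidalCategory D]
    (F : C ⥤ D) [F.Monoidal] (A : Mon D) :
    ∃ inst : MonoidalCategory (CostructuredArrow F A.X),
      (∀ X Y : CostructuredArrow F A.X,
        @MonoidalCategory.tensorObj _ _ inst.toMonoidalCategoryStruct X Y =
          CostructuredArrow.mk
            (δ F X.left Y.left ≫ MonoidalCategory.tensorHom X.hom Y.hom ≫ MonObj.mul (X := A.X))) ∧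
      (@MonoidalCategory.tensorUnit _ _ inst.toMonoidalCategoryStruct :
          CostructuredArrow F A.X) =
        CostructuredArrow.mk (η F ≫ MonObj.one (X := A.X)) ∧
      Nonempty (@Functor.Monoidal _ _ inst _ _ _ (CostructuredArrow.proj F A.X)) :=
  ⟨inferInstance, fun _ _ => rfl, rfl, ⟨inferInstance⟩⟩
end

section
/- Let A be a G-algebra (an algebra with G-action by automorphisms, i.e. an algebra in Rep(G)). The full centre of A in Z(G) is Z(A) = ⊕_{g∈G} Z_g(A), where Z_g(A) = { x ∈ A : xa = g(a)x for all a ∈ A }, with the G-action induced from A satisfying f(Z_g(A)) = Z_{fgf^{-1}}(A); furthermore Z_f(A)·Z_g(A) ⊆ Z_{fg}(A), so Z(A) is a G-graded algebra with compatible G-action, and Z_e(A) is the ordinary centre of A. -/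
/-!
Applying the automorphism `f` to `x a = g(a) x` and substituting `b = f(a)` gives
`f(x) b = (f g f⁻¹)(b) f(x)`, so `f` maps `Z_g(A)` into `Z_{fgf⁻¹}(A)`, with inverse induced by `f⁻¹`.
For `x ∈ Z_f(A)` and `y ∈ Z_g(A)` the two relations chain: `x y a = x g(a) y = f(g(a)) x y`.
-/

namespace Stmt19

variable {k : Type*} [Field k] {G : Type*} [Group G] [DecidableEq G]
variable {A : Type*} [Ring A] [Algebra k A]

/-- `Z_g(A)`, the degree-`g` component of the full centre of the `G`-algebra `A`. -/
def Zg (φ : G →* (A ≃ₐ[k] A)) (g : G) : Set A :=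
  {x : A | ∀ a : A, x * a = φ g a * x}

end Stmt19

namespace Stmt19.Zg

variable {k : Type*} [Field k] {G : Type*} [Group G] {A : Type*} [Ring A] [Algebra k A]
  (φ : G →* (A ≃ₐ[k] A))

def submodule (g : G) : Submodule k A where
  carrier := Zg φ g
  add_mem' {x y} hx hy a := by simp only [add_mul, mul_add, hx a, hy a]
  zero_mem' a := by simp only [zero_mul, mul_zero]
  smul_mem' c x hx a := by simp only [Algebra.smul_mul_assoc, Algebra.mul_smul_comm, hx a]

@[simp]
theorem coe_submodule (g : G) : (submodule φ g : Set A) = Zg φ g := rfl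

variable {φ}

theorem apply_inv_apply (f : G) (a : A) : φ f (φ f⁻¹ a) = a := by
  rw [map_inv, AlgEquiv.aut_inv, AlgEquiv.apply_symm_apply]

theorem inv_apply_apply (f : G) (a : A) : φ f⁻¹ (φ f a) = a := by
  rw [map_inv, AlgEquiv.aut_inv, AlgEquiv.symm_apply_apply]

theorem map_mem {f g : G} {x : A} (hx : x ∈ Zg φ g) : φ f x ∈ Zg φ (f * g * f⁻¹) := by
  intro b
  obtain ⟨a, rfl⟩ := (φ f).surjective b
  calc φ f x * φ f a = φ f (φ g a * x) := by rw [← map_mul, hx]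
    _ = φ (f * g * f⁻¹) (φ f a) * φ f x := by
      rw [map_mul, map_mul, map_mul, AlgEquiv.mul_apply, AlgEquiv.mul_apply, inv_apply_apply]

theorem image_eq (f g : G) : φ f '' Zg φ g = Zg φ (f * g * f⁻¹) := by
  refine Set.Subset.antisymm (Set.image_subset_iff.2 fun x hx => map_mem hx) fun y hy => ?_
  have hy' : φ f⁻¹ y ∈ Zg φ g := by simpa [mul_assoc] using map_mem (f := f⁻¹) hy
  exact ⟨φ f⁻¹ y, hy', apply_inv_apply f y⟩

theorem mul_mem {f g : G} {x y : A} (hx : x ∈ Zg φ f) (hy : y ∈ Zg φ g) :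
    x * y ∈ Zg φ (f * g) := fun a =>
  calc x * y * a = x * (φ g a * y) := by rw [mul_assoc, hy a]
    _ = φ f (φ g a) * x * y := by rw [← mul_assoc, hx]
    _ = φ (f * g) a * (x * y) := by rw [map_mul, AlgEquiv.mul_apply, mul_assoc]

theorem mem_one_iff {x : A} : x ∈ Zg φ 1 ↔ x ∈ Set.center A := by
  simp only [Zg, Set.mem_ofPred_eq, map_one, AlgEquiv.one_apply, Semigroup.mem_center_iff]
  exact forall_congr' fun _ => eq_comm

end Stmt19.Zg

namespace Stmt19

variable {k : Type*} [Field k] {G : Type*} [Group G] [DecidableEq G]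
variable {A : Type*} [Ring A] [Algebra k A]

/-- Let `A` be a `G`-algebra (an algebra with a `G`-action by algebra
automorphisms, i.e. an algebra in `Rep(G)`).  The full centre of `A` in `Z(G)`
is `Z(A) = ⊕_{g ∈ G} Z_g(A)` where `Z_g(A) = {x ∈ A ∣ x a = g(a) x ∀ a}`, with
the `G`-action induced from `A`, which satisfies `f(Z_g(A)) = Z_{fgf⁻¹}(A)`;
moreover `Z_f(A) · Z_g(A) ⊆ Z_{fg}(A)`, so `Z(A)` is a `G`-graded algebra with
compatible `G`-action, `Z_e(A)` is the ordinary centre of `A`, and every pair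
`(Z, ζ)` (a graded space with compatible action together with an equivariant map
`ζ` such that `ζ(z)·a = g(a)·ζ(z)` for `z` of degree `g`) factors uniquely
through the inclusion `Z(A) ⊆ A`-componentwise. -/
theorem stmt_19 (φ : G →* (A ≃ₐ[k] A)) :
    -- each component is a linear subspace
    (∀ g : G, ∃ S : Submodule k A, (S : Set A) = Zg φ g) ∧
    -- the `G`-action on `A` permutes the components: `f(Z_g(A)) = Z_{fgf⁻¹}(A)`
    (∀ f g : G, φ f '' Zg φ g = Zg φ (f * g * f⁻¹)) ∧
    -- `Z(A)` is a graded algebra: `Z_f(A) · Z_g(A) ⊆ Z_{fg}(A)`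
    (∀ f g : G, ∀ x ∈ Zg φ f, ∀ y ∈ Zg φ g, x * y ∈ Zg φ (f * g)) ∧
    -- the degree-`e` component is the ordinary centre of `A`
    (∀ x : A, x ∈ Zg φ (1 : G) ↔ x ∈ Set.center A) ∧
    -- terminality of `Z(A) = ⊕_g Z_g(A)` with the componentwise inclusion:
    -- every pair `(Z, ζ)` satisfying the full-centre condition factors through it
    (∀ (V : Type _) (_ : AddCommGroup V) (_ : Module k V)
      (𝒱 : G → Submodule k V) (_ : DirectSum.IsInternal 𝒱)
      (ρ : G →* (V ≃ₗ[k] V))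
      (_ : ∀ g f : G, (𝒱 f).map (ρ g).toLinearMap = 𝒱 (g * f * g⁻¹))
      (ζ : V →ₗ[k] A)
      (_ : ∀ g : G, ∀ v : V, ζ (ρ g v) = φ g (ζ v))
      (_ : ∀ g : G, ∀ v ∈ 𝒱 g, ∀ a : A, ζ v * a = φ g a * ζ v),
      ∀ g : G, ∀ v ∈ 𝒱 g, ζ v ∈ Zg φ g) :=
  ⟨fun g => ⟨Zg.submodule φ g, Zg.coe_submodule φ g⟩, Zg.image_eq,
    fun _ _ _ hx _ hy => Zg.mul_mem hx hy, fun _ => Zg.mem_one_iff,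
    fun _ _ _ _ _ _ _ _ _ hζ => hζ⟩

end Stmt19
end
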